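/- Let n, k > 1 and k ≤ w < kn, let α₁ be the lexicographically smallest necklace in S_k(n,w↑), and let G_k(n,w↑) denote the concatenation ap(α₁)ap(α₂)⋯ap(α_m), where α₁ < α₂ < ⋯ < α_m are all necklaces in S_k(n,w↑) listed in increasing lexicographic order. Then α₁ is a prefix of G_k(n,w↑) and k^n is a suffix of G_k(n,w↑). -/

import Mathlib

/-- `s` is a string over the alphabet `{1, 2, …, k}`. -/
def IsStr (k : ℕ) (s : List ℕ) : Prop := ∀ x ∈ s, 1 ≤ x ∧ x ≤ k

/-- A necklace is a string that is lexicographically smallest among all of its rotations. -/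
def IsNecklace (s : List ℕ) : Prop := ∀ i : ℕ, s ≤ s.rotate i

/-- `β` is a necklace in `S_k(n, w↑)` (weight at least `w`). -/
def IsNeckInW (k n w : ℕ) (β : List ℕ) : Prop :=
  IsStr k β ∧ β.length = n ∧ w ≤ β.sum ∧ IsNecklace β

/-- `listPow t j` is `j` copies of `t` concatenated. -/
def listPow (t : List ℕ) : ℕ → List ℕ
  | 0 => []
  | j + 1 => t ++ listPow t j

/-- `t` is the aperiodic prefix of `s`: the shortest string some power of which is `s`. -/
def IsApOf (t s : List ℕ) : Prop :=
  (∃ j, 1 ≤ j ∧ s = listPow t j) ∧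
  ∀ u m, 1 ≤ m → s = listPow u m → t.length ≤ u.length

/-!
The necklace `k^n` is the largest in `S_k(n,w↑)`, with `ap(k^n) = k`. A necklace starts with its
least letter, so every other necklace of length `n` is at most `(k-1)k^{n-1}`; that one has
weight `kn - 1 ≥ w` and is aperiodic, so `G` ends in `(k-1)k^{n-1} · k`.

If `α₁` is aperiodic, `G` begins with `ap(α₁) = α₁`. Otherwise minimality forces `α₁ = 1^n`; then
`1^{n-1}2` is the next necklace, and `G` begins with `1 · 1^{n-1}2`.
-/

open List

namespace List

variable {α : Type*}

theorem exists_eq_replicate_append_cons {b : α} :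
    ∀ {x : List α}, x ≠ replicate x.length b → ∃ a c r, x = replicate a b ++ c :: r ∧ c ≠ b
  | [], h => absurd rfl h
  | y :: x, h => by
    by_cases hy : y = b
    · subst hy
      obtain ⟨a, c, r, rfl, hc⟩ := exists_eq_replicate_append_cons (x := x) fun hx => h (by
        rw [length_cons, replicate_succ, ← hx])
      exact ⟨a + 1, c, r, rfl, hc⟩
    · exact ⟨0, y, x, rfl, hy⟩

section LinearOrder

variable [LinearOrder α]

theorem le_replicate_of_forall_le {k : α} :
    ∀ {t : List α}, (∀ e ∈ t, e ≤ k) → t ≤ replicate t.length k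
  | [], _ => le_rfl
  | b :: t, h => by
    rw [length_cons, replicate_succ]
    rcases (h b mem_cons_self).lt_or_eq with hb | rfl
    · exact le_of_lt (Lex.rel hb)
    · exact cons_le_cons b (le_replicate_of_forall_le fun e he => h e (mem_cons_of_mem _ he))

theorem le_of_perm_of_pairwise_le :
    ∀ {s t : List α}, s.Pairwise (· ≤ ·) → s ~ t → s ≤ t
  | [], t, _, hst => by rw [hst.nil_eq]
  | a :: s, [], _, hst => absurd hst.eq_nil (cons_ne_nil a s)
  | a :: s, b :: t, hs, hst => by
    rw [pairwise_cons] at hs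
    have hab : a ≤ b := by
      rcases mem_cons.mp (hst.symm.subset mem_cons_self) with rfl | hb
      · exact le_rfl
      · exact hs.1 b hb
    rcases hab.lt_or_eq with hab | rfl
    · exact le_of_lt (Lex.rel hab)
    · exact cons_le_cons a (le_of_perm_of_pairwise_le hs.2 hst.cons_inv)

end LinearOrder

section Preorder

variable [Preorder α] {L : List α} {x y : α}

theorem Pairwise.eq_cons_of_forall_le (hL : L.Pairwise (· < ·)) (hx : x ∈ L)
    (hmin : ∀ z ∈ L, x ≤ z) : ∃ M, L = x :: M := by
  obtain _ | ⟨z, M⟩ := L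
  · cases hx
  · refine ⟨M, ?_⟩
    rcases mem_cons.mp hx with rfl | hxM
    · rfl
    · exact absurd ((pairwise_cons.mp hL).1 x hxM) (hmin z mem_cons_self).not_gt

theorem Pairwise.eq_append_singleton_of_forall_le (hL : L.Pairwise (· < ·)) (hx : x ∈ L)
    (hmax : ∀ z ∈ L, z ≤ x) : ∃ M, L = M ++ [x] := by
  rcases eq_nil_or_concat L with rfl | ⟨M, z, rfl⟩
  · cases hx
  · refine ⟨M, ?_⟩
    rw [concat_eq_append] at *
    rcases mem_append.mp hx with hxM | hxz
    · exact absurd ((pairwise_append.mp hL).2.2 x hxM z mem_cons_self)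
        (hmax z (by simp)).not_gt
    · rw [mem_singleton.mp hxz]

theorem Pairwise.eq_cons_cons_of_forall_le (hL : L.Pairwise (· < ·)) (hx : x ∈ L) (hy : y ∈ L)
    (hxy : x ≠ y) (hmin : ∀ z ∈ L, x ≤ z) (hnext : ∀ z ∈ L, z ≠ x → y ≤ z) :
    ∃ M, L = x :: y :: M := by
  obtain ⟨M, rfl⟩ := hL.eq_cons_of_forall_le hx hmin
  have hxM := (pairwise_cons.mp hL).1
  obtain ⟨N, rfl⟩ := (pairwise_cons.mp hL).2.eq_cons_of_forall_le
    ((mem_cons.mp hy).resolve_left hxy.symm)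
    fun z hz => hnext z (mem_cons_of_mem _ hz) (hxM z hz).ne'
  exact ⟨N, rfl⟩

theorem Pairwise.eq_append_pair_of_forall_le (hL : L.Pairwise (· < ·)) (hx : x ∈ L) (hy : y ∈ L)
    (hxy : x ≠ y) (hmax : ∀ z ∈ L, z ≤ x) (hprev : ∀ z ∈ L, z ≠ x → z ≤ y) :
    ∃ M, L = M ++ [y, x] := by
  obtain ⟨M, rfl⟩ := hL.eq_append_singleton_of_forall_le hx hmax
  have hMx := fun z hz => (pairwise_append.mp hL).2.2 z hz x mem_cons_self
  obtain ⟨N, rfl⟩ := (pairwise_append.mp hL).1.eq_append_singleton_of_forall_le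
    ((mem_append.mp hy).resolve_right (by simpa using hxy.symm))
    fun z hz => hprev z (mem_append_left _ hz) (hMx z hz).ne
  exact ⟨N, by simp⟩

end Preorder

theorem sum_lt_length_mul {r : List ℕ} {k e : ℕ} (hr : ∀ x ∈ r, x ≤ k) (he : e ∈ r)
    (hek : e < k) : r.sum < r.length * k := by
  obtain ⟨u, v, rfl⟩ := append_of_mem he
  have hu := sum_le_card_nsmul u k fun x hx => hr x (by simp [hx])
  have hv := sum_le_card_nsmul v k fun x hx => hr x (by simp [hx])
  simp only [smul_eq_mul] at hu hv
  simp only [sum_append, sum_cons, length_append, length_cons, add_mul, one_mul]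
  omega

end List

theorem listPow_one (t : List ℕ) : listPow t 1 = t := append_nil t

theorem listPow_singleton (x j : ℕ) : listPow [x] j = replicate j x := by
  induction j with
  | zero => rfl
  | succ j ih => rw [listPow, ih, replicate_succ, singleton_append]

theorem count_listPow (t : List ℕ) (j x : ℕ) : (listPow t j).count x = j * t.count x := by
  induction j with
  | zero => simp [listPow]
  | succ j ih => rw [listPow, count_append, ih, Nat.succ_mul, add_comm]

theorem mem_of_mem_listPow {t : List ℕ} {e : ℕ} : ∀ {j : ℕ}, e ∈ listPow t j → e ∈ t
  | _ + 1, he => (mem_append.mp he).elim id mem_of_mem_listPow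

theorem mem_drop_of_mem_listPow {t : List ℕ} {j i e : ℕ} (hj : 2 ≤ j) (hi : i ≤ t.length)
    (he : e ∈ listPow t j) : e ∈ (listPow t j).drop i := by
  obtain ⟨_, rfl⟩ : ∃ j', j = j' + 2 := ⟨j - 2, by omega⟩
  rw [listPow, drop_append_of_le_length hi, listPow]
  exact mem_append_right _ (mem_append_left _ (mem_of_mem_listPow he))

/-- In a proper power `t ^ j`, the block `b ^ a` before the first letter `c ≠ b` is shorter than
`t`, so a full copy of `t`, hence every letter, occurs after `c`. -/
theorem mem_of_eq_listPow_of_eq_replicate_append_cons {s t r : List ℕ} {j a b c : ℕ}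
    (hj : 2 ≤ j) (hst : s = listPow t j) (hs : s = replicate a b ++ c :: r) (hc : c ≠ b)
    {e : ℕ} (he : e ∈ s) : e ∈ r := by
  have hat : a + 1 ≤ t.length := by
    by_contra! hta
    have ht : t = replicate t.length b := by
      obtain ⟨j, rfl⟩ : ∃ j', j = j' + 1 := ⟨j - 1, by omega⟩
      have := congrArg (take t.length) (hs.symm.trans hst)
      rwa [listPow, take_left, take_append_of_le_length (by simp; omega), take_replicate,
        min_eq_left (by omega), eq_comm] at this
    have hcs : c ∈ s := by simp [hs]
    rw [hst] at hcs
    exact hc (eq_of_mem_replicate (ht ▸ mem_of_mem_listPow hcs))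
  have := mem_drop_of_mem_listPow hj hat (hst ▸ he)
  simpa [← hst, hs, drop_append] using this

theorem IsApOf.eq_of_count_eq_one {u s : List ℕ} (h : IsApOf u s) {x : ℕ} (hx : s.count x = 1) :
    u = s := by
  obtain ⟨⟨j, -, rfl⟩, -⟩ := h
  rw [count_listPow, mul_eq_one] at hx
  rw [hx.1, listPow_one]

theorem IsApOf.eq_singleton_of_eq_replicate {u : List ℕ} {n x : ℕ} (hn : 0 < n)
    (h : IsApOf u (replicate n x)) : u = [x] := by
  obtain ⟨⟨j, -, hs⟩, hmin⟩ := h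
  have hlen : u.length ≤ 1 := by simpa using hmin [x] n hn (listPow_singleton x n).symm
  have hx : x ∈ u := mem_of_mem_listPow (hs ▸ mem_replicate.mpr ⟨hn.ne', rfl⟩)
  match u, hlen, hx with
  | [y], _, hx => rw [mem_singleton.mp hx]

theorem isNecklace_of_pairwise_le {s : List ℕ} (hs : s.Pairwise (· ≤ ·)) : IsNecklace s :=
  fun i => le_of_perm_of_pairwise_le hs (rotate_perm s i).symm

theorem IsNecklace.head_le {h : ℕ} {t : List ℕ} (hs : IsNecklace (h :: t)) {e : ℕ}
    (he : e ∈ h :: t) : h ≤ e := by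
  obtain ⟨u, v, huv⟩ := append_of_mem he
  have hrot := hs u.length
  rw [huv, rotate_append_length_eq, ← huv] at hrot
  rcases hrot.lt_or_eq with hlt | heq
  · exact head_le_of_lt hlt
  · exact (cons_eq_cons.mp heq).1.le

theorem le_pred_cons_replicate_of_isNecklace {x : List ℕ} {n k : ℕ} (hx : IsNecklace x)
    (hxk : ∀ e ∈ x, e ≤ k) (hlen : x.length = n + 1) (hne : x ≠ replicate (n + 1) k) :
    x ≤ (k - 1) :: replicate n k := by
  obtain ⟨e, he, hek⟩ : ∃ e ∈ x, e ≠ k := by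
    by_contra! h
    exact hne (eq_replicate_iff.mpr ⟨hlen, h⟩)
  obtain _ | ⟨h, t⟩ := x
  · cases he
  have hh : h ≤ k - 1 := by have := hx.head_le he; have := hxk e he; omega
  rcases hh.lt_or_eq with hh | rfl
  · exact le_of_lt (Lex.rel hh)
  · have ht : t.length = n := by simpa using hlen
    exact cons_le_cons _ (ht ▸ le_replicate_of_forall_le fun e he => hxk e (mem_cons_of_mem _ he))

theorem replicate_append_two_le {x : List ℕ} {n : ℕ} (hx : ∀ e ∈ x, 1 ≤ e)
    (hlen : x.length = n + 1) (hne : x ≠ replicate (n + 1) 1) : replicate n 1 ++ [2] ≤ x := by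
  obtain ⟨a, c, r, rfl, hc⟩ := exists_eq_replicate_append_cons (hlen ▸ hne)
  have hc2 : 2 ≤ c := by have := hx c (by simp); omega
  have hn : n = a + r.length := by simp at hlen; omega
  rw [hn, replicate_add, append_assoc]
  obtain _ | ⟨e, r⟩ := r
  · rcases hc2.lt_or_eq with hc2 | rfl
    · exact le_of_lt (append_left_lt (Lex.rel hc2))
    · exact le_rfl
  · exact le_of_lt (append_left_lt (Lex.rel (by omega)))

theorem isNeckInW_replicate {k n w : ℕ} (hk : 1 ≤ k) (hw : w ≤ k * n) :
    IsNeckInW k n w (replicate n k) :=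
  ⟨fun e he => by rw [eq_of_mem_replicate he]; omega, length_replicate, by simpa [mul_comm] using hw,
    isNecklace_of_pairwise_le (by simp)⟩

theorem isNeckInW_pred_cons_replicate {k n w : ℕ} (hk : 2 ≤ k) (hw : w < k * (n + 1)) :
    IsNeckInW k (n + 1) w ((k - 1) :: replicate n k) := by
  refine ⟨?_, by simp, ?_, isNecklace_of_pairwise_le ?_⟩
  · intro e he
    rcases mem_cons.mp he with rfl | he
    · omega
    · rw [eq_of_mem_replicate he]; omega
  · simp only [sum_cons, sum_replicate, smul_eq_mul]
    rw [mul_add, mul_one, mul_comm] at hw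
    omega
  · simp [pairwise_replicate]

theorem isNeckInW_replicate_append_two {k n w : ℕ} (hk : 2 ≤ k) (hw : w ≤ n + 2) :
    IsNeckInW k (n + 1) w (replicate n 1 ++ [2]) := by
  refine ⟨?_, by simp, by simp; omega, isNecklace_of_pairwise_le ?_⟩
  · intro e he
    rcases mem_append.mp he with he | he
    · rw [eq_of_mem_replicate he]; omega
    · rw [mem_singleton.mp he]; omega
  · simp [pairwise_append, pairwise_replicate]

/-- If `α ≠ 1^n`, then `α = 1^a c r` with `c ≥ 2`, and `1^a (c-1) k^|r|` is a smaller necklace of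
weight at least `w`: either `r` has a letter below `k`, or, every letter of the proper power `α`
reappearing in `r`, `α = k^n` and the new weight is `kn - 1`. -/
theorem eq_replicate_one_of_isLeast_of_eq_listPow {k n w : ℕ} {α t : List ℕ} {j : ℕ}
    (hw : w < k * n) (hα : IsNeckInW k n w α) (hmin : ∀ β, IsNeckInW k n w β → α ≤ β)
    (hj : 2 ≤ j) (hαt : α = listPow t j) : α = replicate n 1 := by
  obtain ⟨hstr, hlen, hwα, -⟩ := hα
  by_contra hne
  obtain ⟨a, c, r, hdec, hc1⟩ := exists_eq_replicate_append_cons (b := 1) (hlen ▸ hne)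
  have hc : 2 ≤ c ∧ c ≤ k := by have := hstr c (by simp [hdec]); omega
  have hrk : ∀ e ∈ r, e ≤ k := fun e he => (hstr e (by simp [hdec, he])).2
  have hn : n = a + 1 + r.length := by simp [← hlen, hdec]; omega
  have hαsum : α.sum = a + c + r.sum := by simp [hdec, sum_replicate]; omega
  set β := replicate a 1 ++ (c - 1) :: replicate r.length k
  have hβsum : β.sum = a + (c - 1) + r.length * k := by simp [β, sum_replicate]; omega
  have hwβ : w ≤ β.sum := by
    by_cases hr : ∃ e ∈ r, e < k
    · obtain ⟨e, he, hek⟩ := hr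
      have := sum_lt_length_mul hrk he hek
      omega
    · push Not at hr
      have hαk : ∀ e ∈ α, e = k := fun e he =>
        le_antisymm (hrk e (mem_of_eq_listPow_of_eq_replicate_append_cons hj hαt hdec hc1 he))
          (hr e (mem_of_eq_listPow_of_eq_replicate_append_cons hj hαt hdec hc1 he))
      have hck : c = k := hαk c (by simp [hdec])
      have ha : a = 0 := by
        by_contra ha
        have := hαk 1 (by simp [hdec]; omega)
        omega
      have : k * n = k + r.length * k := by rw [hn, ha]; ring
      omega
  have hβ : IsNeckInW k n w β := by
    refine ⟨?_, by simp [β, hn]; omega, hwβ, isNecklace_of_pairwise_le ?_⟩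
    · intro e he
      simp only [β, mem_append, mem_cons, mem_replicate] at he
      omega
    · simp [β, pairwise_append, pairwise_replicate]
      omega
  have hβα : β < α := by rw [hdec]; exact append_left_lt (Lex.rel (by omega))
  exact (hmin β hβ).not_gt hβα

section Granddaddy

variable {k m w : ℕ} {L : List (List ℕ)} {ap : List ℕ → List ℕ}

theorem isPrefix_flatten_map_of_isLeast (hk : 1 < k) (hw : w < k * (m + 1)) {α₁ : List ℕ}
    (hα₁ : IsNeckInW k (m + 1) w α₁) (hα₁min : ∀ β, IsNeckInW k (m + 1) w β → α₁ ≤ β)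
    (hL : L.Pairwise (· < ·)) (hmem : ∀ β, β ∈ L ↔ IsNeckInW k (m + 1) w β)
    (hap : ∀ β ∈ L, IsApOf (ap β) β) : α₁ <+: (L.map ap).flatten := by
  have hα₁L : α₁ ∈ L := (hmem α₁).mpr hα₁
  have hleast : ∀ β ∈ L, α₁ ≤ β := fun β hβ => hα₁min β ((hmem β).mp hβ)
  obtain ⟨⟨j, hj, hα₁t⟩, -⟩ := hap α₁ hα₁L
  rcases hj.eq_or_lt with rfl | hj
  · obtain ⟨M, rfl⟩ := hL.eq_cons_of_forall_le hα₁L hleast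
    rw [listPow_one] at hα₁t
    simp [← hα₁t]
  obtain rfl := eq_replicate_one_of_isLeast_of_eq_listPow hw hα₁ hα₁min hj hα₁t
  have hα₂ := isNeckInW_replicate_append_two (n := m) (w := w) hk
    (by have := hα₁.2.2.1; simp at this; omega)
  obtain ⟨M, rfl⟩ := hL.eq_cons_cons_of_forall_le hα₁L ((hmem _).mpr hα₂)
    (by simp [replicate_succ'])
    hleast fun β hβ => have hβ := (hmem β).mp hβ
      replicate_append_two_le (fun e he => (hβ.1 e he).1) hβ.2.1
  rw [map_cons, map_cons, flatten_cons, flatten_cons,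
    (hap _ (by simp)).eq_singleton_of_eq_replicate m.succ_pos,
    (hap _ (by simp)).eq_of_count_eq_one (x := 2) (by simp [count_replicate])]
  exact ⟨2 :: (M.map ap).flatten, by simp [replicate_succ]⟩

theorem replicate_isSuffix_flatten_map (hk : 1 < k) (hw : w < k * (m + 1))
    (hL : L.Pairwise (· < ·)) (hmem : ∀ β, β ∈ L ↔ IsNeckInW k (m + 1) w β)
    (hap : ∀ β ∈ L, IsApOf (ap β) β) : replicate (m + 1) k <:+ (L.map ap).flatten := by
  have hγ := isNeckInW_replicate (by omega) hw.le
  have hδ := isNeckInW_pred_cons_replicate hk hw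
  obtain ⟨M, rfl⟩ := hL.eq_append_pair_of_forall_le ((hmem _).mpr hγ) ((hmem _).mpr hδ)
    (by simp [replicate_succ]; omega)
    (fun β hβ => have hβ := (hmem β).mp hβ
      hβ.2.1 ▸ le_replicate_of_forall_le fun e he => (hβ.1 e he).2)
    fun β hβ => have hβ := (hmem β).mp hβ
      le_pred_cons_replicate_of_isNecklace hβ.2.2.2 (fun e he => (hβ.1 e he).2) hβ.2.1
  rw [map_append, flatten_append, map_cons, map_cons, map_nil, flatten_cons, flatten_cons,
    (hap _ (by simp)).eq_singleton_of_eq_replicate m.succ_pos,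
    (hap _ (by simp)).eq_of_count_eq_one (x := k - 1) (by simp [count_replicate]; omega)]
  exact ⟨(M.map ap).flatten ++ [k - 1], by simp [replicate_succ']⟩

end Granddaddy

theorem granddaddy_bounded_weight_prefix_suffix_general
    (n k w : ℕ) (hk : 1 < k) (hw2 : w < k * n)
    (α₁ : List ℕ) (hα₁ : IsNeckInW k n w α₁)
    (hα₁min : ∀ β : List ℕ, IsNeckInW k n w β → α₁ ≤ β)
    (L : List (List ℕ)) (hsort : L.Chain' (· < ·))
    (hmem : ∀ β : List ℕ, β ∈ L ↔ IsNeckInW k n w β)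
    (ap : List ℕ → List ℕ) (hap : ∀ β ∈ L, IsApOf (ap β) β) :
    α₁ <+: (L.map ap).flatten ∧ List.replicate n k <:+ (L.map ap).flatten := by
  obtain ⟨m, rfl⟩ : ∃ m, n = m + 1 := ⟨n - 1, by cases n <;> simp_all⟩
  have hL : L.Pairwise (· < ·) := isChain_iff_pairwise.mp hsort
  exact ⟨isPrefix_flatten_map_of_isLeast hk hw2 hα₁ hα₁min hL hmem hap,
    replicate_isSuffix_flatten_map hk hw2 hL hmem hap⟩

/-- For `n, k > 1` and `k ≤ w < kn`, the bounded-weight Granddaddy sequence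
`G_k(n,w↑) = ap(α₁)ap(α₂)⋯ap(α_m)` — where `L = [α₁ < α₂ < ⋯ < α_m]` lists all
necklaces of `S_k(n,w↑)` in increasing lexicographic order — has `α₁` (the smallest
necklace) as a prefix and `k^n` as a suffix. -/
theorem granddaddy_bounded_weight_prefix_suffix
    (n k w : ℕ) (hn : 1 < n) (hk : 1 < k) (hw1 : k ≤ w) (hw2 : w < k * n)
    (α₁ : List ℕ) (hα₁ : IsNeckInW k n w α₁)
    (hα₁min : ∀ β : List ℕ, IsNeckInW k n w β → α₁ ≤ β)
    (L : List (List ℕ)) (hsort : L.Chain' (· < ·))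
    (hmem : ∀ β : List ℕ, β ∈ L ↔ IsNeckInW k n w β)
    (ap : List ℕ → List ℕ) (hap : ∀ β ∈ L, IsApOf (ap β) β) :
    α₁ <+: (L.map ap).flatten ∧ List.replicate n k <:+ (L.map ap).flatten :=
  granddaddy_bounded_weight_prefix_suffix_general n k w hk hw2 α₁ hα₁ hα₁min L hsort hmem ap hap
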